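/- arXiv:2005.11346 — 4 statements merged into one kernel-verified Lean document; each statement's English description precedes it below -/
import Mathlib

section
/- Let U be a proper nonempty open subset of ℝⁿ with n ≥ 2, and define f(x) = (x₁,...,x_{n-1}, xₙ - p_U(x)/2) with p_U(x) = d_U(x)/(1+d_U(x)). If L is a bounded maximal line segment of U in the direction of the n-th coordinate axis (i.e., L = {(x', t) : t ∈ (a,b)} is a connected component of U ∩ λ_{x'} where λ_{x'} = {(x',t) : t ∈ ℝ}), then f maps L onto L. -/
/-!
On the line `t ↦ (x', t)`, `f` acts as the real map `g t = t - p_U(x', t) / 2`. On `(a, b)` we have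
`0 < p_U ≤ d_U ≤ t - a`, because `(x', a) ∉ U`, so `a < g t < t`; and `g b = b` since `(x', b) ∉ U`.
Surjectivity onto `(a, b)` then follows from the intermediate value theorem on `[s, b]`.
-/

open Set Metric

theorem image_Ioo_eq_Ioo_of_lt_self {g : ℝ → ℝ} {a b : ℝ} (hg : ContinuousOn g (Ioc a b))
    (hgb : g b = b) (hlt : ∀ t ∈ Ioo a b, a < g t ∧ g t < t) : g '' Ioo a b = Ioo a b := by
  refine Subset.antisymm ?_ fun s hs => ?_
  · rintro _ ⟨t, ht, rfl⟩
    exact ⟨(hlt t ht).1, (hlt t ht).2.trans ht.2⟩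
  · have hsg : s ∈ Icc (g s) (g b) := ⟨(hlt s hs).2.le, by rw [hgb]; exact hs.2.le⟩
    obtain ⟨t, ⟨hst, htb⟩, hgt⟩ :=
      intermediate_value_Icc hs.2.le (hg.mono (Icc_subset_Ioc_iff hs.2.le |>.2 ⟨hs.1, le_rfl⟩)) hsg
    have htb_ne : t ≠ b := by
      rintro rfl
      exact hs.2.ne (hgt.symm.trans hgb)
    exact ⟨t, ⟨hs.1.trans_le hst, htb.lt_of_ne htb_ne⟩, hgt⟩

theorem image_Ioo_sub_half_infDist_div {X : Type*} [PseudoMetricSpace X] {C : Set X}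
    (hC : IsClosed C) {γ : ℝ → X} (hγ : LipschitzWith 1 γ) {a b : ℝ} (ha : γ a ∈ C)
    (hb : γ b ∈ C) (hγC : ∀ t ∈ Ioo a b, γ t ∉ C) :
    (fun t => t - infDist (γ t) C / (1 + infDist (γ t) C) / 2) '' Ioo a b = Ioo a b := by
  refine image_Ioo_eq_Ioo_of_lt_self ?_ (by simp [infDist_zero_of_mem hb]) fun t ht => ?_
  · have hd : Continuous fun t => infDist (γ t) C := (continuous_infDist_pt C).comp hγ.continuous
    have hd1 : ∀ t, 1 + infDist (γ t) C ≠ 0 := fun t =>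
      (add_pos_of_pos_of_nonneg one_pos infDist_nonneg).ne'
    exact (continuous_id.sub ((hd.div (continuous_const.add hd) hd1).div_const 2)).continuousOn
  · set d := infDist (γ t) C
    have hd_pos : 0 < d := (hC.notMem_iff_infDist_pos ⟨_, ha⟩).1 (hγC t ht)
    have hd_le : d ≤ t - a := calc
      d ≤ dist (γ t) (γ a) := infDist_le_dist_of_mem ha
      _ ≤ dist t a := by simpa using hγ.dist_le_mul t a
      _ = t - a := by rw [Real.dist_eq, abs_of_pos (sub_pos.2 ht.1)]
    have hp_pos : 0 < d / (1 + d) := by positivity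
    have hp_le : d / (1 + d) ≤ d := div_le_self hd_pos.le (by linarith)
    constructor <;> linarith [ht.1]

section VerticalLine

variable {n : ℕ}

def verticalLine (x : EuclideanSpace ℝ (Fin (n + 1))) (t : ℝ) : EuclideanSpace ℝ (Fin (n + 1)) :=
  WithLp.toLp 2 fun i => if i = Fin.last n then t else x i

@[simp]
theorem verticalLine_apply (x : EuclideanSpace ℝ (Fin (n + 1))) (t : ℝ) (i : Fin (n + 1)) :
    verticalLine x t i = if i = Fin.last n then t else x i :=
  rfl

theorem isometry_verticalLine (x : EuclideanSpace ℝ (Fin (n + 1))) :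
    Isometry (verticalLine x) := by
  refine Isometry.of_dist_eq fun t s => ?_
  have hcoord : ∀ i, dist (verticalLine x t i) (verticalLine x s i) ^ 2 =
      if i = Fin.last n then dist t s ^ 2 else 0 := fun i => by
    by_cases h : i = Fin.last n <;> simp [h]
  rw [EuclideanSpace.dist_eq, Finset.sum_congr rfl fun i _ => hcoord i,
    Finset.sum_ite_eq' Finset.univ, if_pos (Finset.mem_univ _), Real.sqrt_sq dist_nonneg]

theorem image_verticalLine (x : EuclideanSpace ℝ (Fin (n + 1))) (S : Set ℝ) :
    verticalLine x '' S = {y | (∀ i, i ≠ Fin.last n → y i = x i) ∧ y (Fin.last n) ∈ S} := by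
  ext y
  constructor
  · rintro ⟨t, ht, rfl⟩
    exact ⟨fun i hi => by simp [hi], by simpa using ht⟩
  · rintro ⟨hx, hS⟩
    refine ⟨y (Fin.last n), hS, PiLp.ext fun i => ?_⟩
    by_cases h : i = Fin.last n
    · simp [h]
    · simp [h, hx i h]

end VerticalLine

theorem stmt_6_general (n : ℕ)
    (U : Set (EuclideanSpace ℝ (Fin (n + 1))))
    (hU : IsOpen U)
    (p : EuclideanSpace ℝ (Fin (n + 1)) → ℝ)
    (hp : ∀ x, p x = Metric.infDist x Uᶜ / (1 + Metric.infDist x Uᶜ))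
    (f : EuclideanSpace ℝ (Fin (n + 1)) → EuclideanSpace ℝ (Fin (n + 1)))
    (hf : ∀ x i, f x i = if i = Fin.last n then x i - p x / 2 else x i)
    (x' : EuclideanSpace ℝ (Fin (n + 1))) (a b : ℝ)
    (L : Set (EuclideanSpace ℝ (Fin (n + 1))))
    (hL : L = {y | (∀ i, i ≠ Fin.last n → y i = x' i) ∧ y (Fin.last n) ∈ Set.Ioo a b})
    (hLU : L ⊆ U)
    (ha : (WithLp.toLp 2 (fun i => if i = Fin.last n then a else x' i) : EuclideanSpace ℝ (Fin (n + 1))) ∉ U)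
    (hb : (WithLp.toLp 2 (fun i => if i = Fin.last n then b else x' i) : EuclideanSpace ℝ (Fin (n + 1))) ∉ U) :
    f '' L = L := by
  have hf_line : f ∘ verticalLine x' =
      verticalLine x' ∘ fun t => t - p (verticalLine x' t) / 2 := by
    funext t
    refine PiLp.ext fun i => ?_
    by_cases h : i = Fin.last n <;> simp [hf, h]
  obtain rfl : p = fun x => infDist x Uᶜ / (1 + infDist x Uᶜ) := funext hp
  rw [← image_verticalLine] at hL
  subst hL
  have hγU : ∀ t ∈ Ioo a b, verticalLine x' t ∉ Uᶜ := fun t ht =>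
    not_not.2 (hLU (mem_image_of_mem _ ht))
  rw [image_image, ← Function.comp_def f, hf_line, image_comp,
    image_Ioo_sub_half_infDist_div hU.isClosed_compl (isometry_verticalLine x').lipschitz ha hb hγU]

/-- Let `U ⊆ ℝⁿ` (n ≥ 2) be proper nonempty open, and
`f(x) = (x₁,…,x_{n-1}, xₙ - p_U(x)/2)`. If `L = {(x',t) : t ∈ (a,b)}` is a bounded maximal
line segment of `U` in the n-th coordinate direction (i.e. `L ⊆ U` and its endpoints lie
outside `U`), then `f` maps `L` onto `L`. -/
theorem stmt_6 (n : ℕ) (hn : 1 ≤ n)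
    (U : Set (EuclideanSpace ℝ (Fin (n + 1))))
    (hU : IsOpen U) (hne : U.Nonempty) (hproper : U ≠ Set.univ)
    (p : EuclideanSpace ℝ (Fin (n + 1)) → ℝ)
    (hp : ∀ x, p x = Metric.infDist x Uᶜ / (1 + Metric.infDist x Uᶜ))
    (f : EuclideanSpace ℝ (Fin (n + 1)) → EuclideanSpace ℝ (Fin (n + 1)))
    (hf : ∀ x i, f x i = if i = Fin.last n then x i - p x / 2 else x i)
    (x' : EuclideanSpace ℝ (Fin (n + 1))) (a b : ℝ) (hab : a < b)
    (L : Set (EuclideanSpace ℝ (Fin (n + 1))))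
    (hL : L = {y | (∀ i, i ≠ Fin.last n → y i = x' i) ∧ y (Fin.last n) ∈ Set.Ioo a b})
    (hLU : L ⊆ U)
    (ha : (WithLp.toLp 2 (fun i => if i = Fin.last n then a else x' i) : EuclideanSpace ℝ (Fin (n + 1))) ∉ U)
    (hb : (WithLp.toLp 2 (fun i => if i = Fin.last n then b else x' i) : EuclideanSpace ℝ (Fin (n + 1))) ∉ U) :
    f '' L = L :=
  stmt_6_general n U hU p hp f hf x' a b L hL hLU ha hb
end

section
/- Let U be a proper nonempty open subset of ℝⁿ and f(x) = (x₁,...,x_{n-1}, xₙ - p_U(x)/2) with p_U(x) = d_U(x)/(1+d_U(x)). If L = {(x',t) : t ∈ ℝ} is a full line contained in U (an unbounded maximal segment in the n-th coordinate direction), then f maps L onto L. -/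
/-!
Since `0 ≤ p ≤ 1`, on the line `L` the map `f` only moves the last coordinate `t` to
`t - p / 2`, a continuous function of `t` within `1/2` of the identity; by the intermediate
value theorem it is onto `ℝ`, so `f` maps `L` onto `L`.
-/

open Set Function Metric

theorem surjective_sub_of_continuous_of_mem_Icc {g : ℝ → ℝ} {a b : ℝ} (hg : Continuous g)
    (hab : ∀ t, g t ∈ Icc a b) : Surjective fun t => t - g t := by
  intro c
  have hle : c + a ≤ c + b := by linarith [(hab 0).1, (hab 0).2]
  have hlow : c + a - g (c + a) ≤ c := by linarith [(hab (c + a)).1]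
  have hhigh : c ≤ c + b - g (c + b) := by linarith [(hab (c + b)).2]
  obtain ⟨t, -, ht⟩ :=
    intermediate_value_Icc hle (continuous_id.sub hg).continuousOn ⟨hlow, hhigh⟩
  exact ⟨t, ht⟩

section InfDist

variable {α : Type*} [PseudoMetricSpace α]

theorem continuous_infDist_div_one_add_infDist (s : Set α) :
    Continuous fun x => infDist x s / (1 + infDist x s) :=
  (continuous_infDist_pt s).div (continuous_const.add (continuous_infDist_pt s))
    fun x => by linarith [infDist_nonneg (x := x) (s := s)]

theorem infDist_div_one_add_infDist_mem_Icc (x : α) (s : Set α) :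
    infDist x s / (1 + infDist x s) ∈ Icc 0 1 := by
  have hd : 0 ≤ infDist x s := infDist_nonneg
  exact ⟨by positivity, (div_le_one (by linarith)).2 (by linarith)⟩

end InfDist

theorem image_coordLine_eq_of_sub_bounded {ι : Type*} [DecidableEq ι] (i₀ : ι)
    (x' : EuclideanSpace ℝ ι) {g : EuclideanSpace ℝ ι → ℝ} {a b : ℝ} (hg : Continuous g)
    (hab : ∀ x, g x ∈ Icc a b) {f : EuclideanSpace ℝ ι → EuclideanSpace ℝ ι}
    (hf : ∀ x i, f x i = if i = i₀ then x i - g x else x i) :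
    f '' {y | ∀ i, i ≠ i₀ → y i = x' i} = {y | ∀ i, i ≠ i₀ → y i = x' i} := by
  ext z
  constructor
  · rintro ⟨w, hw, rfl⟩ i hi
    rw [hf, if_neg hi, hw i hi]
  · intro hz
    set y : ℝ → EuclideanSpace ℝ ι := fun t => WithLp.toLp 2 (update x' i₀ t)
    have hy : Continuous y :=
      (PiLp.continuous_toLp 2 _).comp (continuous_const.update i₀ continuous_id)
    obtain ⟨t, ht⟩ :=
      surjective_sub_of_continuous_of_mem_Icc (hg.comp hy) (fun t => hab (y t)) (z i₀)
    refine ⟨y t, fun i hi => by simp [y, update_of_ne hi], ?_⟩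
    ext i
    rw [hf]
    by_cases hi : i = i₀
    · subst hi
      simpa [y] using ht
    · simp [y, hi, hz i hi]

theorem stmt_7_general (n : ℕ)
    (U : Set (EuclideanSpace ℝ (Fin (n + 1))))
    (p : EuclideanSpace ℝ (Fin (n + 1)) → ℝ)
    (hp : ∀ x, p x = Metric.infDist x Uᶜ / (1 + Metric.infDist x Uᶜ))
    (f : EuclideanSpace ℝ (Fin (n + 1)) → EuclideanSpace ℝ (Fin (n + 1)))
    (hf : ∀ x i, f x i = if i = Fin.last n then x i - p x / 2 else x i)
    (x' : EuclideanSpace ℝ (Fin (n + 1)))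
    (L : Set (EuclideanSpace ℝ (Fin (n + 1))))
    (hL : L = {y | ∀ i, i ≠ Fin.last n → y i = x' i}) :
    f '' L = L := by
  subst hL
  have hp_cont : Continuous p := funext hp ▸ continuous_infDist_div_one_add_infDist Uᶜ
  refine image_coordLine_eq_of_sub_bounded (Fin.last n) x' (g := fun x => p x / 2)
    (a := 0) (b := 1 / 2) (hp_cont.div_const 2) (fun x => ?_) hf
  obtain ⟨h0, h1⟩ := hp x ▸ infDist_div_one_add_infDist_mem_Icc x Uᶜ
  exact ⟨by linarith, by linarith⟩

/-- Let `U ⊆ ℝⁿ` be proper nonempty open, and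
`f(x) = (x₁,…,x_{n-1}, xₙ - p_U(x)/2)`. If `L = {(x',t) : t ∈ ℝ}` is a full line in the
n-th coordinate direction contained in `U`, then `f` maps `L` onto `L`. -/
theorem stmt_7 (n : ℕ)
    (U : Set (EuclideanSpace ℝ (Fin (n + 1))))
    (hU : IsOpen U) (hne : U.Nonempty) (hproper : U ≠ Set.univ)
    (p : EuclideanSpace ℝ (Fin (n + 1)) → ℝ)
    (hp : ∀ x, p x = Metric.infDist x Uᶜ / (1 + Metric.infDist x Uᶜ))
    (f : EuclideanSpace ℝ (Fin (n + 1)) → EuclideanSpace ℝ (Fin (n + 1)))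
    (hf : ∀ x i, f x i = if i = Fin.last n then x i - p x / 2 else x i)
    (x' : EuclideanSpace ℝ (Fin (n + 1)))
    (L : Set (EuclideanSpace ℝ (Fin (n + 1))))
    (hL : L = {y | ∀ i, i ≠ Fin.last n → y i = x' i})
    (hLU : L ⊆ U) :
    f '' L = L :=
  stmt_7_general n U p hp f hf x' L hL
end

section
/- Suppose h₁ : ℝⁿ → ℝⁿ is continuous, T ⊆ ℝⁿ is a set meeting every sphere centred at the origin, h₁(x) = x for x ∈ T, and |h₁(x)| < |x| for x ∉ T. Suppose P : ℝⁿ → ℝⁿ is continuous with |P(y)| = φ(|y|) for all y, where φ : [0,∞) → [0,∞) is strictly increasing. Then the maximum modulus set of h = P ∘ h₁ equals T. -/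
/-- If `h₁` is continuous, fixes each point of a set `T` meeting every sphere about the
origin, satisfies `‖h₁ x‖ < ‖x‖` off `T`, and `P` is continuous with `‖P y‖ = φ(‖y‖)` for a
function `φ` strictly increasing on `[0,∞)`, then the maximum modulus set of `h = P ∘ h₁`
equals `T`. -/
theorem stmt_9 (n : ℕ)
    (h₁ P : EuclideanSpace ℝ (Fin n) → EuclideanSpace ℝ (Fin n))
    (T : Set (EuclideanSpace ℝ (Fin n)))
    (hh₁ : Continuous h₁)
    (hT : ∀ r : ℝ, 0 ≤ r → ∃ x ∈ T, ‖x‖ = r)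
    (hfix : ∀ x ∈ T, h₁ x = x)
    (hlt : ∀ x ∉ T, ‖h₁ x‖ < ‖x‖)
    (hP : Continuous P)
    (φ : ℝ → ℝ) (hφ : StrictMonoOn φ (Set.Ici 0))
    (hPφ : ∀ y, ‖P y‖ = φ ‖y‖) :
    {x | ∀ y, ‖y‖ = ‖x‖ → ‖(P ∘ h₁) y‖ ≤ ‖(P ∘ h₁) x‖} = T := by
  ext x
  simp only [Set.mem_setOf_eq, Function.comp_apply]
  constructor
  · intro hx
    by_contra hxT
    obtain ⟨z, hzT, hz⟩ := hT ‖x‖ (norm_nonneg x)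
    have h1 : ‖P (h₁ z)‖ = φ ‖x‖ := by rw [hPφ, hfix z hzT, hz]
    have h2 : ‖P (h₁ x)‖ = φ ‖h₁ x‖ := hPφ _
    have h3 : φ ‖h₁ x‖ < φ ‖x‖ :=
      hφ (norm_nonneg _) (norm_nonneg _) (hlt x hxT)
    have := hx z hz
    rw [h1, h2] at this
    exact absurd this (not_le.mpr h3)
  · intro hxT y hy
    rw [hPφ, hPφ, hfix x hxT]
    by_cases hyT : y ∈ T
    · rw [hfix y hyT, hy]
    · exact le_of_lt (hφ (norm_nonneg _) (norm_nonneg _) (hy ▸ hlt y hyT))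
end

section
/- Let U be a proper nonempty open subset of ℝⁿ (n ≥ 2) and let f(x) = (x₁,...,x_{n-1}, xₙ - p_U(x)/2) with p_U(x) = d_U(x)/(1+d_U(x)). Then f : U → U is a surjection; that is, f maps U onto itself. -/
/-!
Write `f x = x - q x • e` with `q = p_U / 2` and `e` the last basis vector. Since
`|q x| ‖e‖ < d_U(x)` on `U`, the point `f x` stays in the ball `B(x, d_U(x)) ⊆ U`. For
surjectivity onto `y ∈ U`, the continuous function `t ↦ q (y + t • e) - t` is `≥ 0` at `t = 0`
and `≤ 0` at `t = 1` because `0 ≤ q ≤ 1`; a zero `t` gives `f (y + t • e) = y`, and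
`y + t • e ∈ U` because either `t = 0` or `q` is positive there, while `q` vanishes off `U`.
-/

open Set Metric

section ShiftAlongVector

variable {E : Type*} [NormedAddCommGroup E] [NormedSpace ℝ E] {U : Set E} {q : E → ℝ}

theorem mapsTo_sub_smul_of_lt_infDist (e : E) (hq : ∀ x ∈ U, |q x| * ‖e‖ < infDist x Uᶜ) :
    MapsTo (fun x => x - q x • e) U U := fun x hx =>
  ball_infDist_compl_subset (x := x) <| by
    simpa [dist_eq_norm, norm_smul] using hq x hx

theorem exists_mem_Icc_apply_add_smul_eq (hq : Continuous q) (hq0 : ∀ x, 0 ≤ q x)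
    (hq1 : ∀ x, q x ≤ 1) (y e : E) : ∃ t ∈ Icc (0 : ℝ) 1, q (y + t • e) = t := by
  have hF : Continuous fun t : ℝ => q (y + t • e) - t := by fun_prop
  obtain ⟨t, ht, hzero⟩ := intermediate_value_Icc' zero_le_one hF.continuousOn
    (show (0 : ℝ) ∈ Icc _ _ from ⟨by simpa using hq1 (y + e), by simpa using hq0 y⟩)
  exact ⟨t, ht, sub_eq_zero.1 hzero⟩

theorem surjOn_sub_smul (hq : Continuous q) (hq0 : ∀ x, 0 ≤ q x) (hq1 : ∀ x, q x ≤ 1)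
    (hqU : ∀ x ∉ U, q x = 0) (e : E) : SurjOn (fun x => x - q x • e) U U := by
  intro y hy
  obtain ⟨t, ht, hqt⟩ := exists_mem_Icc_apply_add_smul_eq hq hq0 hq1 y e
  refine ⟨y + t • e, ?_, by simp [hqt]⟩
  rcases ht.1.eq_or_lt with rfl | htpos
  · simpa using hy
  · by_contra hx
    exact htpos.ne' (hqt ▸ hqU _ hx)

end ShiftAlongVector

theorem stmt_17_general (n : ℕ)
    (U : Set (EuclideanSpace ℝ (Fin (n + 1))))
    (hU : IsOpen U) (hproper : U ≠ Set.univ)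
    (p : EuclideanSpace ℝ (Fin (n + 1)) → ℝ)
    (hp : ∀ x, p x = Metric.infDist x Uᶜ / (1 + Metric.infDist x Uᶜ))
    (f : EuclideanSpace ℝ (Fin (n + 1)) → EuclideanSpace ℝ (Fin (n + 1)))
    (hf : ∀ x i, f x i = if i = Fin.last n then x i - p x / 2 else x i) :
    f '' U = U := by
  set e := EuclideanSpace.single (Fin.last n) (1 : ℝ)
  have hf_eq : f = fun x => x - (p x / 2) • e := by
    funext x; ext i
    by_cases h : i = Fin.last n <;> simp [hf, e, h]
  have hd0 (x) : 0 ≤ infDist x Uᶜ := infDist_nonneg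
  have hp0 (x) : 0 ≤ p x := by rw [hp]; exact div_nonneg (hd0 x) (by linarith [hd0 x])
  have hp1 (x) : p x ≤ 1 := by rw [hp, div_le_one (by linarith [hd0 x])]; linarith
  have hp_cont : Continuous p := by
    rw [funext hp]
    exact (continuous_infDist_pt _).div (continuous_const.add (continuous_infDist_pt _))
      fun x => by linarith [hd0 x]
  have hpU (x) (hx : x ∉ U) : p x = 0 := by
    simp [hp, infDist_zero_of_mem (show x ∈ Uᶜ from hx)]
  have hp_lt (x) (hx : x ∈ U) : |p x / 2| * ‖e‖ < infDist x Uᶜ := by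
    have hpos : 0 < infDist x Uᶜ :=
      (hU.isClosed_compl.notMem_iff_infDist_pos (nonempty_compl.2 hproper)).1 (not_not.2 hx)
    have hle : p x ≤ infDist x Uᶜ := by rw [hp]; exact div_le_self (hd0 x) (by linarith [hd0 x])
    rw [abs_of_nonneg (by linarith [hp0 x]), show ‖e‖ = 1 by simp [e]]
    linarith
  rw [hf_eq]
  exact (mapsTo_sub_smul_of_lt_infDist e hp_lt).image_subset.antisymm
    (surjOn_sub_smul (hp_cont.div_const 2) (fun x => by linarith [hp0 x])
      (fun x => by linarith [hp1 x]) (fun x hx => by simp [hpU x hx]) e)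

/-- For a proper nonempty open `U ⊆ ℝⁿ` (n ≥ 2), the map
`f(x) = (x₁,…,x_{n-1}, xₙ - p_U(x)/2)` maps `U` onto itself. -/
theorem stmt_17 (n : ℕ) (hn : 1 ≤ n)
    (U : Set (EuclideanSpace ℝ (Fin (n + 1))))
    (hU : IsOpen U) (hne : U.Nonempty) (hproper : U ≠ Set.univ)
    (p : EuclideanSpace ℝ (Fin (n + 1)) → ℝ)
    (hp : ∀ x, p x = Metric.infDist x Uᶜ / (1 + Metric.infDist x Uᶜ))
    (f : EuclideanSpace ℝ (Fin (n + 1)) → EuclideanSpace ℝ (Fin (n + 1)))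
    (hf : ∀ x i, f x i = if i = Fin.last n then x i - p x / 2 else x i) :
    f '' U = U :=
  stmt_17_general n U hU hproper p hp f hf
end
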